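/- Let V be a real vector space of finite dimension m. For every subspace E ≤ V and every skew-symmetric bilinear form ε on E, the subspace L(E,ε) is a maximal isotropic subspace of V ⊕ V*: it is isotropic for the canonical symmetric bilinear form and has dimension m. -/

import Mathlib

/-!
`L(E,ε)` is the image, under the injection `E × V* → V × V*`, of the kernel of the map
`E × V* → E*`, `(x, ξ) ↦ ξ|_E - ε x`. That map is surjective because every functional on `E`
extends to `V`, so rank–nullity gives `dim L(E,ε) = (dim E + m) - dim E = m`.
Isotropy: for `x + ξ, y + η ∈ L(E,ε)` the form equals `(ε x y + ε y x) / 2`, which vanishes by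
skew-symmetry.
-/

open Module

/-- The canonical symmetric bilinear form on `V ⊕ V*`,
`⟨X+ξ, Y+η⟩ = (1/2)(ξ(Y) + η(X))`. -/
noncomputable def canForm (V : Type*) [AddCommGroup V] [Module ℝ V] :
    LinearMap.BilinForm ℝ (V × Module.Dual ℝ V) :=
  LinearMap.mk₂ ℝ (fun p q => (p.2 q.1 + q.2 p.1) / 2)
    (fun p p' q => by simp; ring)
    (fun c p q => by simp; ring)
    (fun p q q' => by simp; ring)
    (fun c p q => by simp; ring)

/-- The maximal isotropic subspace `L(E,ε) = {X + ξ ∈ E ⊕ V* : ξ|_E = ε(X)}`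
determined by a subspace `E ≤ V` and a bilinear form `ε` on `E`. -/
noncomputable def LEeps {V : Type*} [AddCommGroup V] [Module ℝ V]
    (E : Submodule ℝ V) (ε : E →ₗ[ℝ] E →ₗ[ℝ] ℝ) :
    Submodule ℝ (V × Module.Dual ℝ V) where
  carrier := {p | ∃ h : p.1 ∈ E, ∀ y : E, p.2 y.1 = ε ⟨p.1, h⟩ y}
  add_mem' := by
    rintro p q ⟨hp, hp2⟩ ⟨hq, hq2⟩
    refine ⟨add_mem hp hq, fun y => ?_⟩
    have h1 : (⟨(p + q).1, add_mem hp hq⟩ : E) = ⟨p.1, hp⟩ + ⟨q.1, hq⟩ := rfl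
    rw [h1, map_add]
    simp [hp2 y, hq2 y]
  zero_mem' := ⟨zero_mem E, fun y => by
    have h1 : (⟨(0 : V × Module.Dual ℝ V).1, zero_mem E⟩ : E) = 0 := rfl
    rw [h1, map_zero]
    simp⟩
  smul_mem' := by
    rintro c p ⟨hp, hp2⟩
    refine ⟨Submodule.smul_mem E c hp, fun y => ?_⟩
    have h1 : (⟨(c • p).1, Submodule.smul_mem E c hp⟩ : E) = c • (⟨p.1, hp⟩ : E) := rfl
    rw [h1, map_smul]
    simp [hp2 y]

section

variable {V : Type*} [AddCommGroup V] [Module ℝ V] (E : Submodule ℝ V) (ε : E →ₗ[ℝ] E →ₗ[ℝ] ℝ)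

noncomputable def LEepsConstraint : E × Dual ℝ V →ₗ[ℝ] Dual ℝ E :=
  E.dualRestrict ∘ₗ LinearMap.snd ℝ E (Dual ℝ V) - ε ∘ₗ LinearMap.fst ℝ E (Dual ℝ V)

theorem LEepsConstraint_surjective : Function.Surjective (LEepsConstraint E ε) := fun φ =>
  let ⟨ξ, hξ⟩ := Subspace.dualRestrict_surjective (W := E) φ
  ⟨(0, ξ), by simp [LEepsConstraint, hξ]⟩

theorem LEeps_eq_map_ker_LEepsConstraint :
    LEeps E ε = (LinearMap.ker (LEepsConstraint E ε)).map (E.subtype.prodMap LinearMap.id) := by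
  ext p
  constructor
  · rintro ⟨hp, hξ⟩
    exact ⟨(⟨p.1, hp⟩, p.2), by ext y; simp [LEepsConstraint, hξ y], rfl⟩
  · rintro ⟨⟨x, ξ⟩, hker, rfl⟩
    refine ⟨x.2, fun y => ?_⟩
    simpa [LEepsConstraint, sub_eq_zero] using LinearMap.congr_fun (LinearMap.mem_ker.1 hker) y

theorem finrank_LEeps [FiniteDimensional ℝ V] : finrank ℝ (LEeps E ε) = finrank ℝ V := by
  have hinj : Function.Injective (E.subtype.prodMap (LinearMap.id : Dual ℝ V →ₗ[ℝ] Dual ℝ V)) :=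
    Prod.map_injective.2 ⟨E.injective_subtype, Function.injective_id⟩
  have rank_nullity := (LEepsConstraint E ε).finrank_range_add_finrank_ker
  rw [LinearMap.range_eq_top_of_surjective _ (LEepsConstraint_surjective E ε), finrank_top,
    Subspace.dual_finrank_eq, finrank_prod, Subspace.dual_finrank_eq] at rank_nullity
  rw [LEeps_eq_map_ker_LEepsConstraint, ← (Submodule.equivMapOfInjective _ hinj _).finrank_eq]
  omega

theorem canForm_eq_zero_of_mem_LEeps (hskew : ∀ x y : E, ε x y = - ε y x)
    {p q : V × Dual ℝ V} (hp : p ∈ LEeps E ε) (hq : q ∈ LEeps E ε) : canForm V p q = 0 := by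
  obtain ⟨hp₁, hp₂⟩ := hp
  obtain ⟨hq₁, hq₂⟩ := hq
  show (p.2 q.1 + q.2 p.1) / 2 = 0
  rw [hp₂ ⟨q.1, hq₁⟩, hq₂ ⟨p.1, hp₁⟩, hskew]
  ring

end

theorem LEeps_maximal_isotropic
    (V : Type*) [AddCommGroup V] [Module ℝ V] [FiniteDimensional ℝ V]
    (m : ℕ) (hm : Module.finrank ℝ V = m)
    (E : Submodule ℝ V) (ε : E →ₗ[ℝ] E →ₗ[ℝ] ℝ)
    (hskew : ∀ x y : E, ε x y = - ε y x) :
    (∀ p ∈ LEeps E ε, ∀ q ∈ LEeps E ε, canForm V p q = 0) ∧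
    Module.finrank ℝ (LEeps E ε) = m :=
  ⟨fun _ hp _ hq => canForm_eq_zero_of_mem_LEeps E ε hskew hp hq, (finrank_LEeps E ε).trans hm⟩
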